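/- Weighted sums of the quadrangle vectors q_b and q_w over a perfect matching: let E be a finite set, σ₀, σ₁ permutations of E, m a perfect matching, ρ_{m,c} = (I − ς_{m,c})^{-1}, θ : E → ℝ a fractional matching (every σ₀-cycle sum and σ₁-cycle sum of θ equals 1, θ ≥ 0), and ω an arbitrary E×2 real matrix. For b a cycle of σ₁ let β_b ∈ {0,1}^E be its indicator vector, and for w a cycle of σ₀ let β_w be its indicator vector. Define the E×E matrices B_{m,θ} and W_{m,θ} by: the e-th row of B_{m,θ} is θᵀ·diag(β_{b(e)})·(−½I + ρ_{m,1}), where b(e) is the σ₁-cycle containing e, and the e-th row of W_{m,θ} is θᵀ·diag(β_{w(e)})·(−½I + ρ_{m,0}), where w(e) is the σ₀-cycle containing e. Define q_b, q_w : E → ℝ² as the rows of the E×2 matrices (B_{m,θ} + ½I − ρ_{m,1})·ω and (W_{m,θ} + ½I − ρ_{m,0})·ω respectively. Then for every perfect matching m': Σ_{e∈E} m'(e) q_b(e) = (θᵀ − m'ᵀ)·(−½I + ρ_{m,1})·ω and Σ_{e∈E} m'(e) q_w(e) = (θᵀ − m'ᵀ)·(−½I + ρ_{m,0})·ω. -/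
import Mathlib


open Finset Matrix
open scoped Classical

variable {E : Type*}

/-- A perfect matching of `(E, σ₀, σ₁)`: a `{0,1}`-valued function on `E` such that every
cycle (orbit) of `σ₀` and every cycle of `σ₁` contains exactly one element with value `1`. -/
def IsPerfectMatching (σ₀ σ₁ : Equiv.Perm E) (m : E → ℝ) : Prop :=
  (∀ e, m e = 0 ∨ m e = 1) ∧
  (∀ e, ∃! e', σ₀.SameCycle e e' ∧ m e' = 1) ∧
  (∀ e, ∃! e', σ₁.SameCycle e e' ∧ m e' = 1)

/-- The "broken" permutation matrix `ς_{m,σ}`: the matrix of the permutation `σ`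
(with `(σ e, e)`-entry `1`) in which every column `e` with `m e = 1` is replaced by zero. -/
noncomputable def brokenPermMatrix (σ : Equiv.Perm E) (m : E → ℝ) : Matrix E E ℝ :=
  Matrix.of fun e' e => if e' = σ e ∧ m e = 0 then 1 else 0

/-- The matrix `ρ_{m,σ} = (I - ς_{m,σ})⁻¹`. -/
noncomputable def rhoMatrix [Fintype E] [DecidableEq E] (σ : Equiv.Perm E) (m : E → ℝ) :
    Matrix E E ℝ :=
  (1 - brokenPermMatrix σ m)⁻¹

/-- The indicator vector `β` of the cycle of `σ` containing `e`, as a function on `E`. -/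
noncomputable def cycleIndicator (σ : Equiv.Perm E) (e : E) : E → ℝ :=
  fun e'' => if σ.SameCycle e e'' then 1 else 0

/-- The matrix `B_{m,θ}` whose `e`-th row is `θᵀ · diag(β_{b(e)}) · (-½ I + ρ_{m,1})`,
where `b(e)` is the `σ₁`-cycle containing `e`. -/
noncomputable def Bmat [Fintype E] [DecidableEq E] (σ₁ : Equiv.Perm E) (m θ : E → ℝ) :
    Matrix E E ℝ :=
  Matrix.of fun e =>
    Matrix.vecMul θ
      (Matrix.diagonal (cycleIndicator σ₁ e) * ((-(2⁻¹ : ℝ)) • 1 + rhoMatrix σ₁ m))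

/-- The matrix `W_{m,θ}` whose `e`-th row is `θᵀ · diag(β_{w(e)}) · (-½ I + ρ_{m,0})`,
where `w(e)` is the `σ₀`-cycle containing `e`. -/
noncomputable def Wmat [Fintype E] [DecidableEq E] (σ₀ : Equiv.Perm E) (m θ : E → ℝ) :
    Matrix E E ℝ :=
  Matrix.of fun e =>
    Matrix.vecMul θ
      (Matrix.diagonal (cycleIndicator σ₀ e) * ((-(2⁻¹ : ℝ)) • 1 + rhoMatrix σ₀ m))

/-- The vector `q_b(e)`: the `e`-th row of the `E × 2` matrix `(B_{m,θ} + ½ I - ρ_{m,1}) ω`. -/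
noncomputable def qb [Fintype E] [DecidableEq E] (σ₁ : Equiv.Perm E) (m θ : E → ℝ)
    (ω : Matrix E (Fin 2) ℝ) (e : E) : Fin 2 → ℝ :=
  ((Bmat σ₁ m θ + (2⁻¹ : ℝ) • 1 - rhoMatrix σ₁ m) * ω : Matrix E (Fin 2) ℝ) e

/-- The vector `q_w(e)`: the `e`-th row of the `E × 2` matrix `(W_{m,θ} + ½ I - ρ_{m,0}) ω`. -/
noncomputable def qw [Fintype E] [DecidableEq E] (σ₀ : Equiv.Perm E) (m θ : E → ℝ)
    (ω : Matrix E (Fin 2) ℝ) (e : E) : Fin 2 → ℝ :=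
  ((Wmat σ₀ m θ + (2⁻¹ : ℝ) • 1 - rhoMatrix σ₀ m) * ω : Matrix E (Fin 2) ℝ) e

set_option maxHeartbeats 1000000 in
lemma matching_cycle_sum [Fintype E] [DecidableEq E] (σ : Equiv.Perm E) (m' : E → ℝ)
    (h01 : ∀ e, m' e = 0 ∨ m' e = 1)
    (huniq : ∀ e, ∃! e', σ.SameCycle e e' ∧ m' e' = 1) (k : E) :
    ∑ e ∈ univ.filter (fun e => σ.SameCycle e k), m' e = 1 := by
  obtain ⟨e₀, ⟨hc, h1⟩, huq⟩ := huniq k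
  rw [Finset.sum_eq_single e₀]
  · exact h1
  · intro e he hne
    rcases h01 e with h | h
    · exact h
    · exact absurd (huq e ⟨((Finset.mem_filter.mp he).2).symm, h⟩) hne
  · intro h
    simp only [Finset.mem_filter, Finset.mem_univ, true_and] at h
    exact absurd hc.symm h

lemma vecMul_Bmat [Fintype E] [DecidableEq E] (σ : Equiv.Perm E) (m θ : E → ℝ)
    (m' : E → ℝ) (h01 : ∀ e, m' e = 0 ∨ m' e = 1)
    (huniq : ∀ e, ∃! e', σ.SameCycle e e' ∧ m' e' = 1) :
    Matrix.vecMul m' (Bmat σ m θ) =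
      Matrix.vecMul θ ((-(2⁻¹ : ℝ)) • 1 + rhoMatrix σ m) := by
  set M : Matrix E E ℝ := (-(2⁻¹ : ℝ)) • 1 + rhoMatrix σ m with hM
  funext j
  have hB : ∀ e, Bmat σ m θ e j = ∑ k, θ k * cycleIndicator σ e k * M k j := by
    intro e
    show Matrix.vecMul θ (Matrix.diagonal (cycleIndicator σ e) * M) j = _
    rw [← Matrix.vecMul_vecMul]
    simp [Matrix.vecMul, dotProduct, Matrix.diagonal_apply, mul_ite, ite_mul,
      Finset.sum_ite_eq]
  have hkey : ∀ k, ∑ e, m' e * cycleIndicator σ e k = 1 := by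
    intro k
    have : ∀ e, m' e * cycleIndicator σ e k =
        if σ.SameCycle e k then m' e else 0 := by
      intro e; simp [cycleIndicator, mul_ite]
    rw [Finset.sum_congr rfl fun e _ => this e, ← Finset.sum_filter]
    exact matching_cycle_sum σ m' h01 huniq k
  calc Matrix.vecMul m' (Bmat σ m θ) j
      = ∑ e, m' e * ∑ k, θ k * cycleIndicator σ e k * M k j := by
        simp [Matrix.vecMul, dotProduct, hB]
    _ = ∑ k, (∑ e, m' e * cycleIndicator σ e k) * (θ k * M k j) := by
        rw [Finset.sum_congr rfl fun e (_ : e ∈ univ) => Finset.mul_sum _ _ (m' e),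
          Finset.sum_comm]
        exact Finset.sum_congr rfl fun k _ => by
          rw [Finset.sum_mul]
          exact Finset.sum_congr rfl fun e _ => by ring
    _ = ∑ k, θ k * M k j := by
        exact Finset.sum_congr rfl fun k _ => by rw [hkey k, one_mul]
    _ = Matrix.vecMul θ M j := by simp [Matrix.vecMul, dotProduct]

lemma aux_quadrangle [Fintype E] [DecidableEq E] (σ : Equiv.Perm E) (m θ : E → ℝ)
    (ω : Matrix E (Fin 2) ℝ) (m' : E → ℝ) (h01 : ∀ e, m' e = 0 ∨ m' e = 1)
    (huniq : ∀ e, ∃! e', σ.SameCycle e e' ∧ m' e' = 1) :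
    (∑ e : E, m' e •
        (((Bmat σ m θ + (2⁻¹ : ℝ) • 1 - rhoMatrix σ m) * ω : Matrix E (Fin 2) ℝ) e)) =
      Matrix.vecMul (Matrix.vecMul (θ - m') ((-(2⁻¹ : ℝ)) • 1 + rhoMatrix σ m)) ω := by
  set M : Matrix E E ℝ := (-(2⁻¹ : ℝ)) • 1 + rhoMatrix σ m with hM
  have h1 : (∑ e : E, m' e •
      (((Bmat σ m θ + (2⁻¹ : ℝ) • 1 - rhoMatrix σ m) * ω : Matrix E (Fin 2) ℝ) e)) =
      Matrix.vecMul m' ((Bmat σ m θ + (2⁻¹ : ℝ) • 1 - rhoMatrix σ m) * ω) := by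
    funext j
    simp [Matrix.vecMul, dotProduct, Finset.sum_apply]
  have hA : Bmat σ m θ + (2⁻¹ : ℝ) • 1 - rhoMatrix σ m = Bmat σ m θ - M := by
    rw [hM]; module
  rw [h1, ← Matrix.vecMul_vecMul, hA, Matrix.vecMul_sub,
    vecMul_Bmat σ m θ m' h01 huniq, ← Matrix.sub_vecMul]

/-- Weighted sums of the quadrangle vectors `q_b` and `q_w` over a perfect matching `m'`:
`Σ_e m'(e) q_b(e) = (θᵀ - m'ᵀ)(-½ I + ρ_{m,1}) ω` and
`Σ_e m'(e) q_w(e) = (θᵀ - m'ᵀ)(-½ I + ρ_{m,0}) ω`. -/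
theorem sum_matching_smul_quadrangle_vectors [Fintype E] [DecidableEq E]
    (σ₀ σ₁ : Equiv.Perm E) (m θ : E → ℝ) (ω : Matrix E (Fin 2) ℝ)
    (hm : IsPerfectMatching σ₀ σ₁ m)
    (hθpos : ∀ e, 0 ≤ θ e)
    (hθ0 : ∀ e : E, ∑ e' ∈ univ.filter (fun e' => σ₀.SameCycle e e'), θ e' = 1)
    (hθ1 : ∀ e : E, ∑ e' ∈ univ.filter (fun e' => σ₁.SameCycle e e'), θ e' = 1)
    (m' : E → ℝ) (hm' : IsPerfectMatching σ₀ σ₁ m') :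
    (∑ e : E, m' e • qb σ₁ m θ ω e) =
      Matrix.vecMul (Matrix.vecMul (θ - m') ((-(2⁻¹ : ℝ)) • 1 + rhoMatrix σ₁ m)) ω ∧
    (∑ e : E, m' e • qw σ₀ m θ ω e) =
      Matrix.vecMul (Matrix.vecMul (θ - m') ((-(2⁻¹ : ℝ)) • 1 + rhoMatrix σ₀ m)) ω := by
  constructor
  · exact aux_quadrangle σ₁ m θ ω m' hm'.1 hm'.2.2
  · have hW : Wmat σ₀ m θ = Bmat σ₀ m θ := rfl
    have := aux_quadrangle σ₀ m θ ω m' hm'.1 hm'.2.1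
    simpa [qw, hW] using this
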